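/- arXiv:1509.05699 — 4 statements merged into one kernel-verified Lean document; each statement's English description precedes it below -/
import Mathlib

section
/- Let q ∈ (0,∞] and α ∈ ℝ, and let f be a measurable function on X⁺. Then the functions 𝒜^q f and 𝒞^q_α f are lower semicontinuous on X. (Here for q = ∞ one sets 𝒞^∞_α f(x) := sup over balls B ∋ x of μ(B)^{−(1+α)} · ess sup_{(y,t)∈T(B)} |f(y,t)|.) -/
open MeasureTheory Metric Set Filter ENNReal
open scoped NNReal Topology

noncomputable section

namespace WTS

variable {X : Type*} [MetricSpace X] [MeasurableSpace X]

/-- The measure `dt/t` on `(0,∞) ⊆ ℝ`. -/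
def tMeasure : Measure ℝ :=
  (volume.restrict (Ioi (0:ℝ))).withDensity fun t => ENNReal.ofReal t⁻¹

/-- The measure `dμ(y) dt/t` on the generalised half-space `X⁺ = X × (0,∞)`. -/
def muPlus (μ : Measure X) : Measure (X × ℝ) := μ.prod tMeasure

/-- The cone with vertex `x`. -/
def cone (x : X) : Set (X × ℝ) := {p | dist x p.1 < p.2}

/-- The tent over the ball `B(z,r)`. -/
def tent (z : X) (r : ℝ) : Set (X × ℝ) := {p | 0 < p.2 ∧ ball p.1 p.2 ⊆ ball z r}

/-- Ball volume `V(x,t)`. -/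
def vol (μ : Measure X) (x : X) (t : ℝ) : ℝ≥0∞ := μ (ball x t)

/-- The multiplication operator `V^s`. -/
def Vpow (μ : Measure X) (s : ℝ) (f : X × ℝ → ℂ) : X × ℝ → ℂ := fun p =>
  (((vol μ p.1 p.2).toReal ^ s : ℝ) : ℂ) * f p

/-- `𝒜^q f (x)`, `q` finite. -/
def Aq (μ : Measure X) (q : ℝ) (f : X × ℝ → ℂ) (x : X) : ℝ≥0∞ :=
  (∫⁻ p in cone x, (‖f p‖₊ : ℝ≥0∞) ^ q / vol μ p.1 p.2 ∂muPlus μ) ^ (1/q)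

/-- `𝒜^∞ f (x)`. -/
def Ainf (μ : Measure X) (f : X × ℝ → ℂ) (x : X) : ℝ≥0∞ :=
  essSup (fun p => (‖f p‖₊ : ℝ≥0∞)) ((muPlus μ).restrict (cone x))

/-- `𝒜^q f (x)` for `q ∈ (0,∞]`. -/
def AqE (μ : Measure X) (q : ℝ≥0∞) (f : X × ℝ → ℂ) (x : X) : ℝ≥0∞ :=
  if q = ∞ then Ainf μ f x else Aq μ q.toReal f x

/-- `𝒞^q_α f (x)`, `q` finite. -/
def Cq (μ : Measure X) (q α : ℝ) (f : X × ℝ → ℂ) (x : X) : ℝ≥0∞ :=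
  ⨆ (z : X) (r : ℝ) (_ : 0 < r ∧ x ∈ ball z r),
    μ (ball z r) ^ (-α) *
      ((μ (ball z r))⁻¹ * ∫⁻ p in tent z r, (‖f p‖₊ : ℝ≥0∞) ^ q ∂muPlus μ) ^ (1/q)

/-- `𝒞^∞_α f (x)`. -/
def Cinf (μ : Measure X) (α : ℝ) (f : X × ℝ → ℂ) (x : X) : ℝ≥0∞ :=
  ⨆ (z : X) (r : ℝ) (_ : 0 < r ∧ x ∈ ball z r),
    μ (ball z r) ^ (-(1+α)) *
      essSup (fun p => (‖f p‖₊ : ℝ≥0∞)) ((muPlus μ).restrict (tent z r))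

/-- `𝒞^q_α f (x)` for `q ∈ (0,∞]`. -/
def CqE (μ : Measure X) (q : ℝ≥0∞) (α : ℝ) (f : X × ℝ → ℂ) (x : X) : ℝ≥0∞ :=
  if q = ∞ then Cinf μ α f x else Cq μ q.toReal α f x

/-- The (unweighted) tent space quasinorm `‖f‖_{T^{p,q}}`, `p, q` finite. -/
def tentNorm (μ : Measure X) (p q : ℝ) (f : X × ℝ → ℂ) : ℝ≥0∞ :=
  (∫⁻ x, Aq μ q f x ^ p ∂μ) ^ (1/p)

/-- The weighted tent space quasinorm `‖f‖_{T^{p,q}_s}`, `p, q` finite. -/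
def tentNormS (μ : Measure X) (p q s : ℝ) (f : X × ℝ → ℂ) : ℝ≥0∞ :=
  tentNorm μ p q (Vpow μ (-s) f)

/-- The quasinorm `‖f‖_{T^{p,∞}}`, `p` finite. -/
def tentNormQInf (μ : Measure X) (p : ℝ) (f : X × ℝ → ℂ) : ℝ≥0∞ :=
  (∫⁻ x, Ainf μ f x ^ p ∂μ) ^ (1/p)

/-- The norm `‖f‖_{T^{∞,q}_{s;α}}`, `q` finite. -/
def tentNormPInf (μ : Measure X) (q s α : ℝ) (f : X × ℝ → ℂ) : ℝ≥0∞ :=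
  essSup (Cq μ q α (Vpow μ (-s) f)) μ

/-- The norm `‖f‖_{T^{∞,∞}_{s;α}} = sup_B μ(B)^{-α} ‖V^{-s} f‖_{L^∞(T(B))}`. -/
def tentNormInfInf (μ : Measure X) (s α : ℝ) (f : X × ℝ → ℂ) : ℝ≥0∞ :=
  ⨆ (z : X) (r : ℝ) (_ : 0 < r),
    μ (ball z r) ^ (-α) *
      essSup (fun p => (‖Vpow μ (-s) f p‖₊ : ℝ≥0∞)) ((muPlus μ).restrict (tent z r))

/-- `‖V^{-s} f‖_{L^∞(X⁺)}`. -/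
def linfNormPlus (μ : Measure X) (s : ℝ) (f : X × ℝ → ℂ) : ℝ≥0∞ :=
  essSup (fun p => (‖Vpow μ (-s) f p‖₊ : ℝ≥0∞)) (muPlus μ)

/-- The quasinorm of `T^{p,q}_s` for `p, q ∈ (0,∞]` (with `α = 0` when `p = ∞`,
and with `‖V^{-s}f‖_{L^∞(X⁺)}` when `p = q = ∞`). -/
def TNE (μ : Measure X) (p q : ℝ≥0∞) (s : ℝ) (f : X × ℝ → ℂ) : ℝ≥0∞ :=
  if p = ∞ then
    (if q = ∞ then linfNormPlus μ s f else tentNormPInf μ q.toReal s 0 f)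
  else (∫⁻ x, AqE μ q (Vpow μ (-s) f) x ^ p.toReal ∂μ) ^ (1/p.toReal)

/-- The norm of `L^q_s(X⁺)`, i.e. `L^q` with respect to `V^{-qs-1} dμ dt/t`. -/
def LqsNorm (μ : Measure X) (q s : ℝ) (f : X × ℝ → ℂ) : ℝ≥0∞ :=
  (∫⁻ p, (‖f p‖₊ : ℝ≥0∞) ^ q * vol μ p.1 p.2 ^ (-(q*s)) / vol μ p.1 p.2 ∂muPlus μ) ^ (1/q)

/-- `L^q` norm with respect to a measure. -/
def LqNorm {α : Type*} [MeasurableSpace α] (ν : Measure α) (q : ℝ) (f : α → ℂ) : ℝ≥0∞ :=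
  (∫⁻ x, (‖f x‖₊ : ℝ≥0∞) ^ q ∂ν) ^ (1/q)

/-- Nondegeneracy of a metric measure space. -/
def Nondeg (μ : Measure X) : Prop :=
  ∀ (x : X) (r : ℝ), 0 < r → 0 < μ (ball x r) ∧ μ (ball x r) < ∞

/-- The doubling condition. -/
def Doubling (μ : Measure X) : Prop :=
  ∃ C : ℝ≥0∞, 1 ≤ C ∧ C < ∞ ∧ ∀ (x : X) (r : ℝ), 0 < r → μ (ball x (2*r)) ≤ C * μ (ball x r)

/-- AD-regularity of dimension `n` (for all radii, as appropriate for unbounded spaces). -/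
def ADRegular (μ : Measure X) (n : ℝ) : Prop :=
  ∃ C : ℝ≥0∞, 1 ≤ C ∧ C < ∞ ∧ ∀ (x : X) (r : ℝ), 0 < r →
    ENNReal.ofReal (r ^ n) ≤ C * μ (ball x r) ∧ μ (ball x r) ≤ C * ENNReal.ofReal (r ^ n)

/-- Metric unboundedness. -/
def MetricUnbounded (X : Type*) [MetricSpace X] : Prop :=
  ∀ R : ℝ, ∃ x y : X, R < dist x y

/-- A function on `X⁺` is cylindrically supported if it vanishes a.e. outside a cylinder. -/
def CylSupported (μ : Measure X) (f : X × ℝ → ℂ) : Prop :=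
  ∃ (z : X) (r a b : ℝ), 0 < r ∧ 0 < a ∧ a < b ∧
    ∀ᵐ p ∂muPlus μ, p ∉ ball z r ×ˢ Ioo a b → f p = 0

/-- The K-functional associated with two quasinorms on functions. -/
def Kfun {α : Type*} [MeasurableSpace α] (ν : Measure α)
    (N₀ N₁ : (α → ℂ) → ℝ≥0∞) (t : ℝ≥0∞) (f : α → ℂ) : ℝ≥0∞ :=
  ⨅ (g : α → ℂ) (h : α → ℂ) (_ : f =ᵐ[ν] g + h), N₀ g + t * N₁ h

/-- The real interpolation quasinorm `‖f‖_{(A₀,A₁)_{θ,p}}`, continuous form. -/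
def interpNorm {α : Type*} [MeasurableSpace α] (ν : Measure α)
    (N₀ N₁ : (α → ℂ) → ℝ≥0∞) (θ p : ℝ) (f : α → ℂ) : ℝ≥0∞ :=
  (∫⁻ t in Ioi (0:ℝ),
      (ENNReal.ofReal (t ^ (-θ)) * Kfun ν N₀ N₁ (ENNReal.ofReal t) f) ^ p *
        ENNReal.ofReal t⁻¹) ^ (1/p)

/-- The real interpolation quasinorm, discrete form. -/
def interpNormD {α : Type*} [MeasurableSpace α] (ν : Measure α)
    (N₀ N₁ : (α → ℂ) → ℝ≥0∞) (θ p : ℝ) (f : α → ℂ) : ℝ≥0∞ :=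
  (∑' k : ℤ, (ENNReal.ofReal ((2:ℝ) ^ (-(k:ℝ) * θ)) *
      Kfun ν N₀ N₁ (ENNReal.ofReal ((2:ℝ) ^ (k:ℝ))) f) ^ p) ^ (1/p)

/-- The Whitney region `Ω_{c₀,c₁}(x,t)`. -/
def whitney (c₀ c₁ : ℝ) (x : X) (t : ℝ) : Set (X × ℝ) :=
  ball x (c₀ * t) ×ˢ Ioo (t / c₁) (c₁ * t)

/-- The `L^q`-Whitney average `𝒲^q_{c₀,c₁} f (x,t)` (with respect to `dμ(ξ) dτ`). -/
def Wavg (μ : Measure X) (c₀ c₁ q : ℝ) (f : X × ℝ → ℂ) (x : X) (t : ℝ) : ℝ≥0∞ :=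
  (((μ.prod volume) (whitney c₀ c₁ x t))⁻¹ *
      ∫⁻ p in whitney c₀ c₁ x t, (‖f p‖₊ : ℝ≥0∞) ^ q ∂μ.prod volume) ^ (1/q)

/-- The Z-space quasinorm `‖f‖_{Z^{p,q}_s(X;c₀,c₁)}`. -/
def Znorm (μ : Measure X) (p q s c₀ c₁ : ℝ) (f : X × ℝ → ℂ) : ℝ≥0∞ :=
  (∫⁻ w, Wavg μ c₀ c₁ q (Vpow μ (-s) f) w.1 w.2 ^ p ∂muPlus μ) ^ (1/p)

/-! The cone `Γ(x)` is the increasing union of the shrunken cones `{d(x,y) + ε < t}`, and the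
shrunken cone of width `ε` lies inside `Γ(x')` whenever `d(x,x') < ε`. Hence any set functional that
is monotone and continuous along increasing unions, such as `s ↦ ∫⁻_s F` or `s ↦ ess sup_s g`, is
lower semicontinuous when evaluated on cones. The functions `𝒞^q_α f` are suprema of constants over
the open sets `{x ∈ B}`. -/

section

variable {Y : Type*} [MetricSpace Y]

def shrunkCone (x : Y) (ε : ℝ) : Set (Y × ℝ) := {p | dist x p.1 + ε < p.2}

lemma shrunkCone_subset_cone {x x' : Y} {ε : ℝ} (h : dist x' x < ε) :
    shrunkCone x ε ⊆ cone x' := fun p (hp : dist x p.1 + ε < p.2) =>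
  show dist x' p.1 < p.2 by linarith [dist_triangle x' x p.1]

lemma monotone_shrunkCone_one_div (x : Y) :
    Monotone fun n : ℕ => shrunkCone x (1 / ((n : ℝ) + 1)) :=
  fun _ _ hnm p (hp : dist x p.1 + _ < p.2) =>
    show dist x p.1 + _ < p.2 by linarith [Nat.one_div_le_one_div (α := ℝ) hnm]

lemma iUnion_shrunkCone_one_div (x : Y) :
    ⋃ n : ℕ, shrunkCone x (1 / ((n : ℝ) + 1)) = cone x := by
  ext p
  simp only [shrunkCone, cone, mem_iUnion, mem_ofPred_eq]
  constructor
  · rintro ⟨n, hn⟩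
    linarith [Nat.one_div_pos_of_nat (α := ℝ) (n := n)]
  · intro h
    obtain ⟨n, hn⟩ := exists_nat_one_div_lt (sub_pos.mpr h)
    exact ⟨n, by linarith⟩

lemma lowerSemicontinuous_comp_cone {Φ : Set (Y × ℝ) → ℝ≥0∞} (hmono : Monotone Φ)
    (hcont : ∀ S : ℕ → Set (Y × ℝ), Monotone S → Φ (⋃ n, S n) ≤ ⨆ n, Φ (S n)) :
    LowerSemicontinuous fun x => Φ (cone x) := by
  intro x y hy
  have hy' : y < ⨆ n : ℕ, Φ (shrunkCone x (1 / ((n : ℝ) + 1))) := by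
    refine hy.trans_le ?_
    change Φ (cone x) ≤ _
    rw [← iUnion_shrunkCone_one_div x]
    exact hcont _ (monotone_shrunkCone_one_div x)
  obtain ⟨n, hn⟩ := lt_iSup_iff.mp hy'
  filter_upwards [ball_mem_nhds x (Nat.one_div_pos_of_nat (α := ℝ) (n := n))] with x' hx'
  exact hn.trans_le (hmono (shrunkCone_subset_cone hx'))

lemma lowerSemicontinuous_setLIntegral_cone [MeasurableSpace Y] (ν : Measure (Y × ℝ))
    (F : Y × ℝ → ℝ≥0∞) :
    LowerSemicontinuous fun x => ∫⁻ p in cone x, F p ∂ν :=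
  lowerSemicontinuous_comp_cone (Φ := fun s => ∫⁻ p in s, F p ∂ν)
    (fun _ _ hst => lintegral_mono_set hst)
    fun _ hS => (setLIntegral_iUnion_of_directed F hS.directed_le).le

lemma essSup_restrict_iUnion_le {α : Type*} [MeasurableSpace α] (ν : Measure α) (g : α → ℝ≥0∞)
    (S : ℕ → Set α) : essSup g (ν.restrict (⋃ n, S n)) ≤ ⨆ n, essSup g (ν.restrict (S n)) :=
  essSup_le_of_ae_le _ <| (ae_restrict_iUnion_iff S _).mpr fun n =>
    (ae_le_essSup g).mono fun _ hp => hp.trans (le_iSup (fun n => essSup g (ν.restrict (S n))) n)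

lemma lowerSemicontinuous_essSup_cone [MeasurableSpace Y] (ν : Measure (Y × ℝ))
    (g : Y × ℝ → ℝ≥0∞) :
    LowerSemicontinuous fun x => essSup g (ν.restrict (cone x)) :=
  lowerSemicontinuous_comp_cone
    (fun _ _ hst => essSup_mono_measure' (Measure.restrict_mono hst le_rfl))
    fun S _ => essSup_restrict_iUnion_le ν g S

lemma lowerSemicontinuous_Aq [MeasurableSpace Y] (μ : Measure Y) {q : ℝ} (hq : 0 ≤ q)
    (f : Y × ℝ → ℂ) :
    LowerSemicontinuous (Aq μ q f) :=
  ENNReal.continuous_rpow_const.comp_lowerSemicontinuous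
    (lowerSemicontinuous_setLIntegral_cone _ _) (ENNReal.monotone_rpow_of_nonneg (by positivity))

lemma lowerSemicontinuous_Ainf [MeasurableSpace Y] (μ : Measure Y) (f : Y × ℝ → ℂ) :
    LowerSemicontinuous (Ainf μ f) :=
  lowerSemicontinuous_essSup_cone _ _

end

lemma IsOpen.lowerSemicontinuous_iSup_mem {α : Type*} [TopologicalSpace α] {U : Set α}
    (hU : IsOpen U) (c : ℝ≥0∞) : LowerSemicontinuous fun x => ⨆ (_ : x ∈ U), c := by
  convert hU.lowerSemicontinuous_indicator (zero_le (a := c)) using 2 with x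
  by_cases hx : x ∈ U <;> simp [hx]

lemma lowerSemicontinuous_iSup_mem_ball {Y : Type*} [PseudoMetricSpace Y]
    (g : Y → ℝ → ℝ≥0∞) :
    LowerSemicontinuous fun x => ⨆ (z : Y) (r : ℝ) (_ : 0 < r ∧ x ∈ ball z r), g z r :=
  lowerSemicontinuous_iSup fun z => lowerSemicontinuous_iSup fun r =>
    IsOpen.lowerSemicontinuous_iSup_mem (isOpen_const.inter isOpen_ball) (g z r)

theorem stmt0_general {X : Type*} [MetricSpace X] [MeasurableSpace X]
    (μ : Measure X) (q : ℝ≥0∞) (α : ℝ)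
    (f : X × ℝ → ℂ) :
    LowerSemicontinuous (AqE μ q f) ∧ LowerSemicontinuous (CqE μ q α f) := by
  unfold AqE CqE
  by_cases hq : q = ∞
  · simp only [hq, if_true]
    exact ⟨lowerSemicontinuous_Ainf μ f, lowerSemicontinuous_iSup_mem_ball _⟩
  · simp only [hq, if_false]
    exact ⟨lowerSemicontinuous_Aq μ ENNReal.toReal_nonneg f, lowerSemicontinuous_iSup_mem_ball _⟩

/-- For `q ∈ (0,∞]` and `α ∈ ℝ`, the functions `𝒜^q f` and `𝒞^q_α f`
are lower semicontinuous on `X`. -/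
theorem stmt0 {X : Type*} [MetricSpace X] [MeasurableSpace X] [BorelSpace X] [Nonempty X]
    (μ : Measure X) (hμ : Nondeg μ) (q : ℝ≥0∞) (hq : 0 < q) (α : ℝ)
    (f : X × ℝ → ℂ) (hf : Measurable f) :
    LowerSemicontinuous (AqE μ q f) ∧ LowerSemicontinuous (CqE μ q α f) :=
  stmt0_general μ q α f

end WTS
end
end

section
/- Let p,q ∈ (0,∞), let f be measurable on X⁺ with ‖f‖_{T^{p,q}} < ∞, fix x₀ ∈ X, and for each integer k ≥ 1 set f_k := 1_{B(x₀,k)×(k^{−1},k)} · f. Then lim_{k→∞} ‖f − f_k‖_{T^{p,q}} = 0. In particular, the cylindrically supported functions in T^{p,q} are dense in T^{p,q}. -/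
open MeasureTheory Metric Set Filter ENNReal
open scoped NNReal Topology

noncomputable section

namespace WTS

variable {X : Type*} [MetricSpace X] [MeasurableSpace X]

/-! Dominated convergence, twice. Since `𝒜^q f ∈ L^p`, for a.e. `x` the integral of `|f|^q / V`
over the cone `Γ(x)` is finite; the cylinders exhaust `X⁺`, so the integrand of `f - f_k` vanishes
eventually at every point, hence `𝒜^q (f - f_k)(x) → 0` for a.e. `x`, dominated by `𝒜^q f(x)`.
A second dominated convergence, in `L^p(X)`, finishes. Measurability of `x ↦ 𝒜^q f(x)` is not
automatic, since `X` need not be separable: it comes from lower semicontinuity, via Fatou's lemma. -/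

section Monotonicity

variable {X : Type*} [MetricSpace X] [MeasurableSpace X] (μ : Measure X) {p q : ℝ}

lemma Aq_mono (hq : 0 < q) {f g : X × ℝ → ℂ} (hfg : ∀ w, ‖f w‖ ≤ ‖g w‖) (x : X) :
    Aq μ q f x ≤ Aq μ q g x := by
  refine ENNReal.rpow_le_rpow (lintegral_mono fun w => ?_) (by positivity)
  gcongr
  exact_mod_cast hfg w

lemma tentNorm_mono (hp : 0 < p) (hq : 0 < q) {f g : X × ℝ → ℂ} (hfg : ∀ w, ‖f w‖ ≤ ‖g w‖) :
    tentNorm μ p q f ≤ tentNorm μ p q g := by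
  refine ENNReal.rpow_le_rpow (lintegral_mono fun x => ?_) (by positivity)
  gcongr
  exact Aq_mono μ hq hfg x

end Monotonicity

section Measurability

lemma lowerSemicontinuous_setLIntegral_sections {Y Z : Type*} [TopologicalSpace Y]
    [FirstCountableTopology Y] [TopologicalSpace Z] [MeasurableSpace Z] [OpensMeasurableSpace Z]
    (ν : Measure Z) {U : Set (Y × Z)} (hU : IsOpen U) {F : Z → ℝ≥0∞} (hF : Measurable F) :
    LowerSemicontinuous fun y => ∫⁻ z in {z | (y, z) ∈ U}, F z ∂ν := by
  have hsec : ∀ y, MeasurableSet {z | (y, z) ∈ U} := fun y =>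
    (hU.preimage (Continuous.prodMk_right y)).measurableSet
  refine lowerSemicontinuous_iff_le_liminf.2 fun y => ?_
  have hpt : ∀ z, {z | (y, z) ∈ U}.indicator F z ≤
      liminf (fun y' => {z | (y', z) ∈ U}.indicator F z) (𝓝 y) := fun z =>
    ((hU.preimage (Continuous.prodMk_left z)).lowerSemicontinuous_indicator
      zero_le).le_liminf y
  simp_rw [← lintegral_indicator (hsec _)]
  exact (lintegral_mono hpt).trans (lintegral_liminf_le fun y' => hF.indicator (hsec y'))

variable {X : Type*} [MetricSpace X] [MeasurableSpace X] [BorelSpace X]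

lemma measurableSet_cone (x : X) : MeasurableSet (cone x) :=
  (isOpen_lt (continuous_const.dist continuous_fst) continuous_snd).measurableSet

lemma measurable_vol (μ : Measure X) : Measurable fun w : X × ℝ => vol μ w.1 w.2 := by
  have hU : IsOpen {v : (X × ℝ) × X | dist v.2 v.1.1 < v.1.2} :=
    isOpen_lt (continuous_snd.dist continuous_fst.fst) continuous_fst.snd
  have h := (lowerSemicontinuous_setLIntegral_sections μ hU
    (measurable_const (a := (1 : ℝ≥0∞)))).measurable
  simp only [setLIntegral_one] at h
  exact h

lemma measurable_setLIntegral_cone (μ : Measure X) {F : X × ℝ → ℝ≥0∞} (hF : Measurable F) :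
    Measurable fun x => ∫⁻ w in cone x, F w ∂muPlus μ := by
  have hU : IsOpen {v : X × (X × ℝ) | dist v.1 v.2.1 < v.2.2} :=
    isOpen_lt (continuous_fst.dist continuous_snd.fst) continuous_snd.snd
  exact (lowerSemicontinuous_setLIntegral_sections (muPlus μ) hU hF).measurable

lemma measurable_Aq (μ : Measure X) (q : ℝ) {f : X × ℝ → ℂ} (hf : Measurable f) :
    Measurable (Aq μ q f) :=
  (measurable_setLIntegral_cone μ
    ((hf.nnnorm.coe_nnreal_ennreal.pow_const q).div (measurable_vol μ))).pow_const _

end Measurability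

section Convergence

variable {X : Type*} [MetricSpace X] [MeasurableSpace X] [BorelSpace X]
  (μ : Measure X) {p q : ℝ}

lemma ae_Aq_lt_top (hp : 0 < p) {f : X × ℝ → ℂ} (hf : Measurable f)
    (hfin : tentNorm μ p q f < ∞) : ∀ᵐ x ∂μ, Aq μ q f x < ∞ := by
  have hint : ∫⁻ x, Aq μ q f x ^ p ∂μ ≠ ∞ :=
    ((ENNReal.rpow_lt_top_iff_of_pos (one_div_pos.2 hp)).1 hfin).ne
  filter_upwards [ae_lt_top ((measurable_Aq μ q hf).pow_const p) hint] with x hx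
  exact (ENNReal.rpow_lt_top_iff_of_pos hp).1 hx

variable {S : ℕ → Set (X × ℝ)}

lemma tendsto_Aq_indicator_compl (hq : 0 < q) {f : X × ℝ → ℂ} (hf : Measurable f)
    (hSm : ∀ k, MeasurableSet (S k)) (hS : ∀ w : X × ℝ, 0 < w.2 → ∀ᶠ k in atTop, w ∈ S k)
    {x : X} (hx : Aq μ q f x < ∞) :
    Tendsto (fun k => Aq μ q ((S k)ᶜ.indicator f) x) atTop (𝓝 0) := by
  have hint : ∫⁻ w in cone x, (‖f w‖₊ : ℝ≥0∞) ^ q / vol μ w.1 w.2 ∂muPlus μ ≠ ∞ :=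
    ((ENNReal.rpow_lt_top_iff_of_pos (one_div_pos.2 hq)).1 hx).ne
  have hlim : ∀ᵐ w ∂(muPlus μ).restrict (cone x), Tendsto
      (fun k => (‖(S k)ᶜ.indicator f w‖₊ : ℝ≥0∞) ^ q / vol μ w.1 w.2) atTop (𝓝 0) := by
    refine (ae_restrict_iff' (measurableSet_cone x)).2 (ae_of_all _ fun w hw => ?_)
    refine tendsto_const_nhds.congr' ?_
    filter_upwards [hS w (dist_nonneg.trans_lt hw)] with k hk
    simp [indicator_of_notMem (notMem_compl_iff.2 hk), ENNReal.zero_rpow_of_pos hq]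
  have hdom := tendsto_lintegral_of_dominated_convergence
    (fun w => (‖f w‖₊ : ℝ≥0∞) ^ q / vol μ w.1 w.2)
    (fun k => ((hf.indicator (hSm k).compl).nnnorm.coe_nnreal_ennreal.pow_const q).div
      (measurable_vol μ))
    (fun k => ae_of_all _ fun w => ENNReal.div_le_div_right (ENNReal.rpow_le_rpow
      (by exact_mod_cast norm_indicator_le_norm_self f w) hq.le) _) hint hlim
  simpa [Aq, ENNReal.zero_rpow_of_pos (inv_pos.2 hq)] using hdom.ennrpow_const (1 / q)

lemma tendsto_tentNorm_indicator_compl (hp : 0 < p) (hq : 0 < q) {f : X × ℝ → ℂ}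
    (hf : Measurable f) (hfin : tentNorm μ p q f < ∞) (hSm : ∀ k, MeasurableSet (S k))
    (hS : ∀ w : X × ℝ, 0 < w.2 → ∀ᶠ k in atTop, w ∈ S k) :
    Tendsto (fun k => tentNorm μ p q ((S k)ᶜ.indicator f)) atTop (𝓝 0) := by
  have hint : ∫⁻ x, Aq μ q f x ^ p ∂μ ≠ ∞ :=
    ((ENNReal.rpow_lt_top_iff_of_pos (one_div_pos.2 hp)).1 hfin).ne
  have hlim : ∀ᵐ x ∂μ, Tendsto (fun k => Aq μ q ((S k)ᶜ.indicator f) x ^ p) atTop (𝓝 0) := by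
    filter_upwards [ae_Aq_lt_top μ hp hf hfin] with x hx
    simpa [ENNReal.zero_rpow_of_pos hp] using
      (tendsto_Aq_indicator_compl μ hq hf hSm hS hx).ennrpow_const p
  have hdom := tendsto_lintegral_of_dominated_convergence (fun x => Aq μ q f x ^ p)
    (fun k => (measurable_Aq μ q (hf.indicator (hSm k).compl)).pow_const p)
    (fun k => ae_of_all _ fun x =>
      ENNReal.rpow_le_rpow (Aq_mono μ hq (norm_indicator_le_norm_self f) x) hp.le) hint hlim
  simpa [tentNorm, ENNReal.zero_rpow_of_pos (inv_pos.2 hp)] using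
    hdom.ennrpow_const (1 / p)

end Convergence

lemma eventually_mem_cylinder {X : Type*} [MetricSpace X] (x₀ : X) (w : X × ℝ) (hw : 0 < w.2) :
    ∀ᶠ k : ℕ in atTop, w ∈ ball x₀ (k : ℝ) ×ˢ Ioo ((k : ℝ)⁻¹) (k : ℝ) := by
  filter_upwards [tendsto_natCast_atTop_atTop.eventually_gt_atTop (dist w.1 x₀),
    tendsto_natCast_atTop_atTop.eventually_gt_atTop w.2,
    tendsto_natCast_atTop_atTop.eventually_gt_atTop w.2⁻¹] with k h₁ h₂ h₃
  exact ⟨mem_ball.2 h₁, inv_lt_of_inv_lt₀ hw h₃, h₂⟩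

lemma cylSupported_indicator_cylinder {X : Type*} [MetricSpace X] [MeasurableSpace X]
    (μ : Measure X) (f : X × ℝ → ℂ) (x₀ : X) {k : ℝ} (hk : 1 < k) :
    CylSupported μ ((ball x₀ k ×ˢ Ioo k⁻¹ k).indicator f) := by
  have hk₀ : 0 < k := one_pos.trans hk
  exact ⟨x₀, k, k⁻¹, k, hk₀, inv_pos.2 hk₀, (inv_lt_one_of_one_lt₀ hk).trans hk,
    ae_of_all _ fun w hw => indicator_of_notMem hw f⟩

theorem stmt1_general {X : Type*} [MetricSpace X] [MeasurableSpace X] [BorelSpace X]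
    (μ : Measure X) (p q : ℝ) (hp : 0 < p) (hq : 0 < q)
    (f : X × ℝ → ℂ) (hf : Measurable f) (hfin : tentNorm μ p q f < ∞) (x₀ : X) :
    Tendsto (fun k : ℕ => tentNorm μ p q fun w =>
        f w - (ball x₀ (k : ℝ) ×ˢ Ioo ((k : ℝ)⁻¹) (k : ℝ)).indicator f w)
      atTop (𝓝 0) ∧
    ∀ ε : ℝ≥0∞, 0 < ε → ∃ g : X × ℝ → ℂ, CylSupported μ g ∧ tentNorm μ p q g < ∞ ∧
      tentNorm μ p q (fun w => f w - g w) < ε := by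
  have htend : Tendsto (fun k : ℕ => tentNorm μ p q fun w =>
      f w - (ball x₀ (k : ℝ) ×ˢ Ioo ((k : ℝ)⁻¹) (k : ℝ)).indicator f w) atTop (𝓝 0) := by
    simpa only [← Pi.sub_apply, ← indicator_compl] using
      tendsto_tentNorm_indicator_compl μ hp hq hf hfin
        (fun k => measurableSet_ball.prod measurableSet_Ioo) (eventually_mem_cylinder x₀)
  refine ⟨htend, fun ε hε => ?_⟩
  obtain ⟨k, hkε, hk⟩ := ((htend.eventually (Iio_mem_nhds hε)).and
    (tendsto_natCast_atTop_atTop.eventually_gt_atTop (1 : ℝ))).exists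
  exact ⟨_, cylSupported_indicator_cylinder μ f x₀ hk,
    (tentNorm_mono μ hp hq (norm_indicator_le_norm_self f)).trans_lt hfin, hkε⟩

/-- Truncations of `f ∈ T^{p,q}` to cylinders converge to `f` in `T^{p,q}`;
in particular cylindrically supported functions are dense in `T^{p,q}`. -/
theorem stmt1 {X : Type*} [MetricSpace X] [MeasurableSpace X] [BorelSpace X] [Nonempty X]
    (μ : Measure X) (hμ : Nondeg μ) (p q : ℝ) (hp : 0 < p) (hq : 0 < q)
    (f : X × ℝ → ℂ) (hf : Measurable f) (hfin : tentNorm μ p q f < ∞) (x₀ : X) :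
    Tendsto (fun k : ℕ => tentNorm μ p q fun w =>
        f w - (ball x₀ (k : ℝ) ×ˢ Ioo ((k : ℝ)⁻¹) (k : ℝ)).indicator f w)
      atTop (𝓝 0) ∧
    ∀ ε : ℝ≥0∞, 0 < ε → ∃ g : X × ℝ → ℂ, CylSupported μ g ∧ tentNorm μ p q g < ∞ ∧
      tentNorm μ p q (fun w => f w - g w) < ε :=
  stmt1_general μ p q hp hq f hf hfin x₀

end WTS
end
end

section
/- Let q ∈ (0,∞), p ∈ (0,q], s ∈ ℝ, c₀ ∈ (0,∞), and c₁ ∈ (1,∞). Then there is a constant C such that for every measurable f on ℝⁿ×(0,∞), ‖f‖_{T^{p,q}_s(ℝⁿ)} ≤ C ‖f‖_{Z^{p,q}_s(ℝⁿ;c₀,c₁)}; that is, Z^{p,q}_s(ℝⁿ;c₀,c₁) embeds continuously into T^{p,q}_s(ℝⁿ). -/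
open MeasureTheory Metric Set Filter ENNReal
open scoped NNReal Topology

noncomputable section

namespace WTS

variable {X : Type*} [MetricSpace X] [MeasurableSpace X]

/-!
Cut the cone `Γ(x)` into the pieces `coneBox c₀ c₁ a u x = B(x + a u, c₀ a / 2) × [a, c₁ a)`,
with `a = c₁ ^ k`, `k ∈ ℤ`, and `u` running over a finite `c₀/2`-net of the ball of radius `c₁`.
Each piece lies in the Whitney region of each of its points and `V ≥ |B(0, a)|` on it, so the
integral of `|f|^q / V` over a piece is at most a constant times the Whitney average of `|f|^q`
at any point of the piece. As `p/q ≤ 1`, `(∑ aᵢ)^(p/q) ≤ ∑ aᵢ^(p/q)`; averaging over the piece and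
integrating in `x` (Fubini and translation invariance) bounds the contribution of the pieces at
height `c₁ ^ k` by the integral of `(𝒲^q f)^p` over the slab `ℝⁿ × [c₁ ^ k, c₁ ^ (k+1))`, and
these slabs are disjoint.
-/

lemma rpow_sum_le_sum_rpow {ι : Type*} (s : Finset ι) (a : ι → ℝ≥0∞) {θ : ℝ}
    (hθ₀ : 0 < θ) (hθ₁ : θ ≤ 1) : (∑ i ∈ s, a i) ^ θ ≤ ∑ i ∈ s, a i ^ θ := by
  classical
  induction s using Finset.induction_on with
  | empty => simp [ENNReal.zero_rpow_of_pos hθ₀]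
  | insert i s hi ih =>
    rw [Finset.sum_insert hi, Finset.sum_insert hi]
    exact (ENNReal.rpow_add_le_add_rpow _ _ hθ₀.le hθ₁).trans (add_le_add le_rfl ih)

lemma rpow_tsum_le_tsum_rpow {ι : Type*} (a : ι → ℝ≥0∞) {θ : ℝ} (hθ₀ : 0 < θ) (hθ₁ : θ ≤ 1) :
    (∑' i, a i) ^ θ ≤ ∑' i, a i ^ θ := by
  rw [ENNReal.tsum_eq_iSup_sum, (ENNReal.monotone_rpow_of_nonneg hθ₀.le).map_iSup_of_continuousAt
    ENNReal.continuous_rpow_const.continuousAt (ENNReal.zero_rpow_of_pos hθ₀)]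
  exact iSup_le fun s => (rpow_sum_le_sum_rpow s a hθ₀ hθ₁).trans (ENNReal.sum_le_tsum s)

instance : SFinite tMeasure := by
  unfold tMeasure
  infer_instance

instance (μ : Measure X) [SFinite μ] : SFinite (muPlus μ) := by
  unfold muPlus
  infer_instance

lemma tMeasure_restrict_Ici_le {a : ℝ} (ha : 0 < a) :
    tMeasure.restrict (Ici a) ≤ ENNReal.ofReal a⁻¹ • volume := by
  refine Measure.le_iff.2 fun s hs => ?_
  have hsa : MeasurableSet (s ∩ Ici a) := hs.inter measurableSet_Ici
  rw [Measure.restrict_apply hs, tMeasure, withDensity_apply _ hsa, Measure.restrict_restrict hsa,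
    Measure.smul_apply, smul_eq_mul]
  calc ∫⁻ t in s ∩ Ici a ∩ Ioi 0, ENNReal.ofReal t⁻¹
      ≤ ∫⁻ _ in s ∩ Ici a, ENNReal.ofReal a⁻¹ := by
        refine (setLIntegral_mono' (hsa.inter measurableSet_Ioi) fun t ht =>
          ENNReal.ofReal_le_ofReal (inv_anti₀ ha ht.1.2)).trans ?_
        exact lintegral_mono' (Measure.restrict_mono inter_subset_left le_rfl) le_rfl
    _ ≤ ENNReal.ofReal a⁻¹ * volume s := by
        rw [setLIntegral_const]
        exact mul_le_mul_right (measure_mono inter_subset_left) _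

lemma ofReal_one_sub_inv_le_tMeasure_Ico {a c : ℝ} (ha : 0 < a) (hc : 0 < c) :
    ENNReal.ofReal (1 - c⁻¹) ≤ tMeasure (Ico a (c * a)) := by
  rw [tMeasure, withDensity_apply _ measurableSet_Ico, Measure.restrict_restrict measurableSet_Ico,
    inter_eq_self_of_subset_left (show Ico a (c * a) ⊆ Ioi 0 from fun t ht => ha.trans_le ht.1)]
  calc ENNReal.ofReal (1 - c⁻¹) = ∫⁻ _ in Ico a (c * a), ENNReal.ofReal (c * a)⁻¹ := by
        rw [setLIntegral_const, Real.volume_Ico, ← ENNReal.ofReal_mul (by positivity)]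
        congr 1
        field_simp
    _ ≤ ∫⁻ t in Ico a (c * a), ENNReal.ofReal t⁻¹ :=
        setLIntegral_mono' measurableSet_Ico fun t ht =>
          ENNReal.ofReal_le_ofReal (inv_anti₀ (ha.trans_le ht.1) ht.2.le)

lemma setLIntegral_prod_tMeasure_le {α : Type*} [MeasurableSpace α] (μ : Measure α) [SFinite μ]
    {a : ℝ} (ha : 0 < a) {s : Set (α × ℝ)} (hs : s ⊆ univ ×ˢ Ici a) (G : α × ℝ → ℝ≥0∞) :
    ∫⁻ z in s, G z ∂μ.prod tMeasure ≤ ENNReal.ofReal a⁻¹ * ∫⁻ z in s, G z ∂μ.prod volume := by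
  have hle : (μ.prod tMeasure).restrict s ≤ ENNReal.ofReal a⁻¹ • (μ.prod volume).restrict s :=
    calc (μ.prod tMeasure).restrict s
        = (μ.prod (tMeasure.restrict (Ici a))).restrict s := by
          rw [← Measure.restrict_univ (μ := μ), Measure.prod_restrict, Measure.restrict_univ,
            Measure.restrict_restrict_of_subset hs]
      _ ≤ (μ.prod (ENNReal.ofReal a⁻¹ • volume)).restrict s :=
          Measure.restrict_mono subset_rfl (Measure.prod_mono le_rfl (tMeasure_restrict_Ici_le ha))
      _ = ENNReal.ofReal a⁻¹ • (μ.prod volume).restrict s := by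
          rw [Measure.prod_smul_right, Measure.restrict_smul]
  exact (lintegral_mono' hle le_rfl).trans_eq (lintegral_smul_measure _ _)

lemma tMeasure_Ico_ne_top {a : ℝ} (ha : 0 < a) (b : ℝ) : tMeasure (Ico a b) ≠ ∞ := by
  have h := tMeasure_restrict_Ici_le ha (Ico a b)
  rw [Measure.restrict_apply measurableSet_Ico, inter_eq_left.2 Ico_subset_Ici_self] at h
  exact (h.trans_lt (by simp [ENNReal.mul_lt_top])).ne

lemma le_setLAverage_of_forall_le {α : Type*} [MeasurableSpace α] {ν : Measure α} {s : Set α}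
    (hs : MeasurableSet s) (h₀ : ν s ≠ 0) (h_top : ν s ≠ ∞) {c : ℝ≥0∞} {H : α → ℝ≥0∞}
    (h : ∀ w ∈ s, c ≤ H w) : c ≤ ⨍⁻ w in s, H w ∂ν := by
  rw [← setLAverage_const h₀ h_top c]
  exact laverage_mono_ae (ae_restrict_of_forall_mem hs h)

lemma tsum_setLIntegral_Ico_zpow_le {α : Type*} [MeasurableSpace α] (ν : Measure (α × ℝ))
    {c : ℝ} (hc : 1 ≤ c) (H : α × ℝ → ℝ≥0∞) :
    ∑' k : ℤ, ∫⁻ w in univ ×ˢ Ico (c ^ k) (c ^ (k + 1)), H w ∂ν ≤ ∫⁻ w, H w ∂ν := by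
  have hdisj : Pairwise (Function.onFun Disjoint fun k : ℤ => Ico (c ^ k) (c ^ (k + 1))) := by
    simpa only [Order.succ_eq_add_one] using (zpow_right_mono₀ hc).pairwise_disjoint_on_Ico_succ
  rw [← lintegral_iUnion (fun k => MeasurableSet.univ.prod measurableSet_Ico)
    fun i j hij => disjoint_prod.2 (Or.inr (hdisj hij))]
  exact setLIntegral_le_lintegral _ _

section Measurability

variable {α β : Type*} [MeasurableSpace α] [MeasurableSpace β] {ν : Measure β} [SFinite ν]
  {s : Set (α × β)} {f : β → ℝ≥0∞}

lemma measurable_setLIntegral_prodMk_preimage (hs : MeasurableSet s) (hf : Measurable f) :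
    Measurable fun a => ∫⁻ b in Prod.mk a ⁻¹' s, f b ∂ν := by
  simp_rw [← lintegral_indicator (measurable_prodMk_left hs)]
  exact ((hf.comp measurable_snd).indicator hs).lintegral_prod_right'

lemma measurable_setLAverage_prodMk_preimage (hs : MeasurableSet s) (hf : Measurable f) :
    Measurable fun a => ⨍⁻ b in Prod.mk a ⁻¹' s, f b ∂ν := by
  simp_rw [setLAverage_eq]
  exact (measurable_setLIntegral_prodMk_preimage hs hf).div (measurable_measure_prodMk_left hs)

end Measurability

lemma measurableSet_mem_whitney [OpensMeasurableSpace X] [SecondCountableTopology X]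
    (c₀ c₁ : ℝ) : MeasurableSet {z : (X × ℝ) × (X × ℝ) | z.2 ∈ whitney c₀ c₁ z.1.1 z.1.2} := by
  simp only [whitney, mem_prod, mem_ball, mem_Ioo, ofPred_and]
  exact (measurableSet_lt (measurable_snd.fst.dist measurable_fst.fst)
    (measurable_fst.snd.const_mul c₀)).inter
    ((measurableSet_lt (measurable_fst.snd.div_const c₁) measurable_snd.snd).inter
      (measurableSet_lt measurable_snd.snd (measurable_fst.snd.const_mul c₁)))

lemma measurable_setLAverage_whitney [OpensMeasurableSpace X] [SecondCountableTopology X]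
    (μ : Measure X) [SFinite μ] (c₀ c₁ : ℝ) {G : X × ℝ → ℝ≥0∞} (hG : Measurable G) :
    Measurable fun w : X × ℝ => ⨍⁻ z in whitney c₀ c₁ w.1 w.2, G z ∂μ.prod volume :=
  measurable_setLAverage_prodMk_preimage
    (s := {z : (X × ℝ) × (X × ℝ) | z.2 ∈ whitney c₀ c₁ z.1.1 z.1.2})
    (measurableSet_mem_whitney c₀ c₁) hG

section Haar

variable {E : Type*} [NormedAddCommGroup E] [MeasurableSpace E] [BorelSpace E]

lemma vol_eq (μ : Measure E) [μ.IsAddHaarMeasure] (y : E) (t : ℝ) :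
    vol μ y t = μ (ball 0 t) :=
  Measure.addHaar_ball_center μ y t

lemma measurable_vol_s15 (μ : Measure E) [μ.IsAddHaarMeasure] :
    Measurable fun z : E × ℝ => vol μ z.1 z.2 := by
  simp_rw [vol_eq]
  exact (Monotone.measurable fun t t' h => measure_mono (ball_subset_ball h)).comp measurable_snd

lemma measurable_Vpow (μ : Measure E) [μ.IsAddHaarMeasure] (s : ℝ) {f : E × ℝ → ℂ}
    (hf : Measurable f) : Measurable (Vpow μ s f) :=
  (Complex.measurable_ofReal.comp ((measurable_vol_s15 μ).ennreal_toReal.pow_const s)).mul hf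

lemma measurableSet_mem_ball_add_prod [SecondCountableTopology E] {β : Type*} [MeasurableSpace β]
    (v : E) (ρ : ℝ) {J : Set β} (hJ : MeasurableSet J) :
    MeasurableSet {z : E × (E × β) | z.2 ∈ ball (z.1 + v) ρ ×ˢ J} :=
  (measurableSet_lt (measurable_snd.fst.dist (measurable_fst.add_const v)) measurable_const).inter
    (measurable_snd.snd hJ)

lemma lintegral_setLIntegral_ball_add_prod {β : Type*} [MeasurableSpace β] (μ : Measure E)
    [SecondCountableTopology E] [SFinite μ] [μ.IsAddHaarMeasure] {ν : Measure β} [SFinite ν]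
    (v : E) (ρ : ℝ) {J : Set β} (hJ : MeasurableSet J) {H : E × β → ℝ≥0∞} (hH : Measurable H) :
    ∫⁻ x, ∫⁻ w in ball (x + v) ρ ×ˢ J, H w ∂μ.prod ν ∂μ
      = μ (ball 0 ρ) * ∫⁻ w in univ ×ˢ J, H w ∂μ.prod ν := by
  set s := {z : E × (E × β) | z.2 ∈ ball (z.1 + v) ρ ×ˢ J}
  have hs : MeasurableSet s := measurableSet_mem_ball_add_prod v ρ hJ
  have hJ' : MeasurableSet (univ ×ˢ J : Set (E × β)) := MeasurableSet.univ.prod hJ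
  have hslice (w : E × β) : ∫⁻ x, s.indicator (fun z => H z.2) (x, w) ∂μ
      = μ (ball 0 ρ) * (univ ×ˢ J).indicator H w := by
    have hdist (x : E) : dist w.1 (x + v) = dist x (w.1 - v) := by
      rw [dist_eq_norm, dist_eq_norm, ← norm_neg]
      congr 1
      abel
    have hind (x : E) : s.indicator (fun z => H z.2) (x, w)
        = (ball (w.1 - v) ρ).indicator (fun _ => (univ ×ˢ J).indicator H w) x := by
      by_cases hw : w.2 ∈ J <;> by_cases hx : x ∈ ball (w.1 - v) ρ <;>
        simp_all [s, indicator, mem_ball]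
    simp_rw [hind]
    rw [lintegral_indicator_const measurableSet_ball, Measure.addHaar_ball_center, mul_comm]
  calc ∫⁻ x, ∫⁻ w in ball (x + v) ρ ×ˢ J, H w ∂μ.prod ν ∂μ
      = ∫⁻ x, ∫⁻ w, s.indicator (fun z => H z.2) (x, w) ∂μ.prod ν ∂μ := by
        refine lintegral_congr fun x => ?_
        rw [← lintegral_indicator (measurableSet_ball.prod hJ)]
        rfl
    _ = ∫⁻ w, ∫⁻ x, s.indicator (fun z => H z.2) (x, w) ∂μ ∂μ.prod ν :=
        lintegral_lintegral_swap (μ := μ) (ν := μ.prod ν)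
          ((hH.comp measurable_snd).indicator hs).aemeasurable
    _ = μ (ball 0 ρ) * ∫⁻ w in univ ×ˢ J, H w ∂μ.prod ν := by
        simp_rw [hslice]
        rw [lintegral_const_mul _ (hH.indicator hJ'), lintegral_indicator hJ']

end Haar

section ConeBox

variable {E : Type*} [NormedAddCommGroup E] [NormedSpace ℝ E] {c₀ c₁ a : ℝ}

def coneBox (c₀ c₁ a : ℝ) (u x : E) : Set (E × ℝ) :=
  ball (x + a • u) (c₀ / 2 * a) ×ˢ Ico a (c₁ * a)

lemma coneBox_subset_whitney (hc₀ : 0 ≤ c₀) (hc₁ : 0 < c₁) {u x : E} {w : E × ℝ}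
    (hw : w ∈ coneBox c₀ c₁ a u x) : coneBox c₀ c₁ a u x ⊆ whitney c₀ c₁ w.1 w.2 := by
  obtain ⟨hw₁, hwa, hwc⟩ := hw
  rintro z ⟨hz₁, hza, hzc⟩
  refine ⟨?_, ?_, ?_⟩
  · calc dist z.1 w.1 ≤ dist z.1 (x + a • u) + dist w.1 (x + a • u) := dist_triangle_right _ _ _
      _ < c₀ / 2 * a + c₀ / 2 * a := add_lt_add hz₁ hw₁
      _ = c₀ * a := by ring
      _ ≤ c₀ * w.2 := mul_le_mul_of_nonneg_left hwa hc₀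
  · rw [div_lt_iff₀ hc₁]
    nlinarith
  · nlinarith

lemma exists_mem_coneBox_of_mem_cone (hc₁ : 1 < c₁) {S : Finset E}
    (hS : closedBall (0 : E) c₁ ⊆ ⋃ u ∈ S, ball u (c₀ / 2)) {x : E} {z : E × ℝ}
    (hz : z ∈ cone x) : ∃ k : ℤ, ∃ u ∈ S, z ∈ coneBox c₀ c₁ (c₁ ^ k) u x := by
  obtain ⟨k, hk, hk'⟩ := exists_mem_Ico_zpow (dist_nonneg.trans_lt hz) hc₁
  set a := c₁ ^ k
  have ha : 0 < a := zpow_pos (zero_lt_one.trans hc₁) k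
  rw [zpow_add_one₀ (zero_lt_one.trans hc₁).ne', mul_comm] at hk'
  have hv : a⁻¹ • (z.1 - x) ∈ closedBall (0 : E) c₁ := by
    rw [mem_closedBall_zero_iff, norm_smul, Real.norm_of_nonneg (inv_nonneg.2 ha.le),
      inv_mul_le_iff₀ ha, ← dist_eq_norm, dist_comm]
    exact (hz.trans hk').le.trans_eq (mul_comm _ _)
  obtain ⟨u, hu, hvu⟩ := mem_iUnion₂.1 (hS hv)
  refine ⟨k, u, hu, ?_, hk, hk'⟩
  have hdecomp : z.1 - (x + a • u) = a • (a⁻¹ • (z.1 - x) - u) := by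
    rw [smul_sub, smul_inv_smul₀ ha.ne']
    abel
  rw [mem_ball, dist_eq_norm, hdecomp, norm_smul, Real.norm_of_nonneg ha.le, mul_comm _ a]
  rw [mem_ball, dist_eq_norm] at hvu
  exact mul_lt_mul_of_pos_left hvu ha

lemma rpow_setLIntegral_cone_le_tsum [MeasurableSpace E] (ν : Measure (E × ℝ)) (hc₁ : 1 < c₁)
    {S : Finset E} (hS : closedBall (0 : E) c₁ ⊆ ⋃ u ∈ S, ball u (c₀ / 2)) {θ : ℝ} (hθ₀ : 0 < θ)
    (hθ₁ : θ ≤ 1) (F : E × ℝ → ℝ≥0∞) (x : E) :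
    (∫⁻ z in cone x, F z ∂ν) ^ θ
      ≤ ∑' i : ℤ × S, (∫⁻ z in coneBox c₀ c₁ (c₁ ^ i.1) i.2 x, F z ∂ν) ^ θ := by
  have hcover : ∫⁻ z in cone x, F z ∂ν
      ≤ ∑' i : ℤ × S, ∫⁻ z in coneBox c₀ c₁ (c₁ ^ i.1) i.2 x, F z ∂ν := by
    refine (lintegral_mono_set fun z hz => ?_).trans (lintegral_iUnion_le _ _)
    obtain ⟨k, u, hu, hzu⟩ := exists_mem_coneBox_of_mem_cone hc₁ hS hz
    exact mem_iUnion.2 ⟨(k, ⟨u, hu⟩), hzu⟩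
  exact (ENNReal.rpow_le_rpow hcover hθ₀.le).trans (rpow_tsum_le_tsum_rpow _ hθ₀ hθ₁)

variable [MeasurableSpace E] [BorelSpace E] (μ : Measure E) [μ.IsAddHaarMeasure]

lemma measurableSet_coneBox (c₀ c₁ a : ℝ) (u x : E) : MeasurableSet (coneBox c₀ c₁ a u x) :=
  measurableSet_ball.prod measurableSet_Ico

lemma muPlus_coneBox (c₀ c₁ a : ℝ) (u x : E) :
    muPlus μ (coneBox c₀ c₁ a u x) = μ (ball 0 (c₀ / 2 * a)) * tMeasure (Ico a (c₁ * a)) := by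
  rw [muPlus, coneBox, Measure.prod_prod, Measure.addHaar_ball_center]

variable [FiniteDimensional ℝ E]

lemma measure_whitney_le (hc₀ : 0 < c₀) (hc₁ : 0 < c₁) (ha : 0 < a) {w : E × ℝ}
    (hw : w.2 ∈ Ico a (c₁ * a)) :
    μ.prod volume (whitney c₀ c₁ w.1 w.2)
      ≤ ENNReal.ofReal ((c₀ * c₁) ^ Module.finrank ℝ E * c₁ ^ 2) * μ (ball 0 a) *
        ENNReal.ofReal a := by
  have hw₀ : 0 ≤ w.2 := ha.le.trans hw.1
  rw [whitney, Measure.prod_prod, Real.volume_Ioo, Measure.addHaar_ball_center]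
  calc μ (ball 0 (c₀ * w.2)) * ENNReal.ofReal (c₁ * w.2 - w.2 / c₁)
      ≤ μ (ball 0 ((c₀ * c₁) * a)) * ENNReal.ofReal (c₁ ^ 2 * a) := by
        gcongr μ (ball 0 ?_) * ENNReal.ofReal ?_
        · nlinarith [hw.2]
        · nlinarith [hw.2, div_nonneg hw₀ hc₁.le]
    _ = _ := by
        rw [Measure.addHaar_ball_mul_of_pos μ 0 (by positivity), ENNReal.ofReal_mul (by positivity),
          ENNReal.ofReal_mul (by positivity)]
        ring

lemma setLIntegral_coneBox_le (hc₀ : 0 < c₀) (hc₁ : 0 < c₁) (ha : 0 < a)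
    (G : E × ℝ → ℝ≥0∞) {u x : E} {w : E × ℝ} (hw : w ∈ coneBox c₀ c₁ a u x) :
    ∫⁻ z in coneBox c₀ c₁ a u x, G z / vol μ z.1 z.2 ∂muPlus μ
      ≤ ENNReal.ofReal ((c₀ * c₁) ^ Module.finrank ℝ E * c₁ ^ 2) *
        ⨍⁻ z in whitney c₀ c₁ w.1 w.2, G z ∂μ.prod volume := by
  set K := ENNReal.ofReal ((c₀ * c₁) ^ Module.finrank ℝ E * c₁ ^ 2)
  set B := μ (ball (0 : E) a)
  have hB₀ : B ≠ 0 := (measure_ball_pos μ 0 ha).ne'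
  have hB_top : B ≠ ∞ := measure_ball_lt_top.ne
  have hΩ := measure_whitney_le μ hc₀ hc₁ ha hw.2
  have hΩ_top : μ.prod volume (whitney c₀ c₁ w.1 w.2) ≠ ∞ :=
    (hΩ.trans_lt (by finiteness)).ne
  calc ∫⁻ z in coneBox c₀ c₁ a u x, G z / vol μ z.1 z.2 ∂muPlus μ
      ≤ ∫⁻ z in coneBox c₀ c₁ a u x, B⁻¹ * G z ∂muPlus μ := by
        refine setLIntegral_mono' (measurableSet_coneBox c₀ c₁ a u x) fun z hz => ?_
        rw [vol_eq, div_eq_mul_inv, mul_comm]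
        gcongr
        exact measure_mono (ball_subset_ball hz.2.1)
    _ = B⁻¹ * ∫⁻ z in coneBox c₀ c₁ a u x, G z ∂μ.prod tMeasure :=
        lintegral_const_mul' _ _ (ENNReal.inv_ne_top.2 hB₀)
    _ ≤ B⁻¹ * (ENNReal.ofReal a⁻¹ * ∫⁻ z in whitney c₀ c₁ w.1 w.2, G z ∂μ.prod volume) := by
        gcongr
        refine (setLIntegral_prod_tMeasure_le μ ha (fun z hz => ⟨trivial, hz.2.1⟩) G).trans ?_
        gcongr
        exact coneBox_subset_whitney hc₀.le hc₁ hw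
    _ ≤ B⁻¹ * (ENNReal.ofReal a⁻¹ * (K * B * ENNReal.ofReal a *
          ⨍⁻ z in whitney c₀ c₁ w.1 w.2, G z ∂μ.prod volume)) := by
        rw [← measure_mul_setLAverage _ hΩ_top]
        gcongr
    _ = K * (B⁻¹ * B) * (ENNReal.ofReal a⁻¹ * ENNReal.ofReal a) *
          ⨍⁻ z in whitney c₀ c₁ w.1 w.2, G z ∂μ.prod volume := by ring
    _ = K * ⨍⁻ z in whitney c₀ c₁ w.1 w.2, G z ∂μ.prod volume := by
        rw [ENNReal.inv_mul_cancel hB₀ hB_top, ← ENNReal.ofReal_mul (inv_nonneg.2 ha.le),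
          inv_mul_cancel₀ ha.ne', ENNReal.ofReal_one, mul_one, mul_one]

lemma lintegral_rpow_setLIntegral_coneBox_le (hc₀ : 0 < c₀) (hc₁ : 1 < c₁) (ha : 0 < a) (u : E)
    {θ : ℝ} (hθ : 0 ≤ θ) {G : E × ℝ → ℝ≥0∞} (hG : Measurable G) :
    ∫⁻ x, (∫⁻ z in coneBox c₀ c₁ a u x, G z / vol μ z.1 z.2 ∂muPlus μ) ^ θ ∂μ
      ≤ ENNReal.ofReal ((c₀ * c₁) ^ Module.finrank ℝ E * c₁ ^ 2) ^ θ *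
          (ENNReal.ofReal (1 - c₁⁻¹))⁻¹ *
        ∫⁻ w in univ ×ˢ Ico a (c₁ * a),
          (⨍⁻ z in whitney c₀ c₁ w.1 w.2, G z ∂μ.prod volume) ^ θ ∂muPlus μ := by
  set K := ENNReal.ofReal ((c₀ * c₁) ^ Module.finrank ℝ E * c₁ ^ 2)
  set W := fun w : E × ℝ => (⨍⁻ z in whitney c₀ c₁ w.1 w.2, G z ∂μ.prod volume) ^ θ
  have hW : Measurable W := (measurable_setLAverage_whitney μ c₀ c₁ hG).pow_const θ
  set B := μ (ball (0 : E) (c₀ / 2 * a))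
  set T := tMeasure (Ico a (c₁ * a))
  have hB₀ : B ≠ 0 := (measure_ball_pos μ 0 (by positivity)).ne'
  have hB_top : B ≠ ∞ := measure_ball_lt_top.ne
  have hT : ENNReal.ofReal (1 - c₁⁻¹) ≤ T := ofReal_one_sub_inv_le_tMeasure_Ico ha (by positivity)
  have hT₀ : T ≠ 0 :=
    ((ENNReal.ofReal_pos.2 (sub_pos.2 (inv_lt_one_of_one_lt₀ hc₁))).trans_le hT).ne'
  have hT_top : T ≠ ∞ := tMeasure_Ico_ne_top ha _
  have hbox (x : E) : muPlus μ (coneBox c₀ c₁ a u x) = B * T := muPlus_coneBox μ c₀ c₁ a u x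
  have hpt (x : E) : (∫⁻ z in coneBox c₀ c₁ a u x, G z / vol μ z.1 z.2 ∂muPlus μ) ^ θ
      ≤ ⨍⁻ w in coneBox c₀ c₁ a u x, K ^ θ * W w ∂muPlus μ := by
    refine le_setLAverage_of_forall_le (measurableSet_coneBox c₀ c₁ a u x)
      (hbox x ▸ mul_ne_zero hB₀ hT₀) (hbox x ▸ ENNReal.mul_ne_top hB_top hT_top) fun w hw => ?_
    exact (ENNReal.rpow_le_rpow (setLIntegral_coneBox_le μ hc₀ (by positivity) ha G hw) hθ).trans_eq
      (ENNReal.mul_rpow_of_nonneg _ _ hθ)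
  have havg (x : E) : ⨍⁻ w in coneBox c₀ c₁ a u x, K ^ θ * W w ∂muPlus μ
      = (B * T)⁻¹ * K ^ θ * ∫⁻ w in coneBox c₀ c₁ a u x, W w ∂muPlus μ := by
    rw [setLAverage_eq, hbox, lintegral_const_mul _ hW, ENNReal.div_eq_inv_mul, mul_assoc]
  calc ∫⁻ x, (∫⁻ z in coneBox c₀ c₁ a u x, G z / vol μ z.1 z.2 ∂muPlus μ) ^ θ ∂μ
      ≤ ∫⁻ x, (B * T)⁻¹ * K ^ θ * ∫⁻ w in coneBox c₀ c₁ a u x, W w ∂muPlus μ ∂μ :=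
        lintegral_mono fun x => (hpt x).trans_eq (havg x)
    _ = (B * T)⁻¹ * K ^ θ * (B * ∫⁻ w in univ ×ˢ Ico a (c₁ * a), W w ∂muPlus μ) := by
        rw [lintegral_const_mul' _ _ (ENNReal.mul_ne_top
          (ENNReal.inv_ne_top.2 (mul_ne_zero hB₀ hT₀))
          (ENNReal.rpow_ne_top_of_nonneg hθ ENNReal.ofReal_ne_top))]
        exact congrArg _ (lintegral_setLIntegral_ball_add_prod μ (a • u) _ measurableSet_Ico hW)
    _ = K ^ θ * T⁻¹ * (B⁻¹ * B) * ∫⁻ w in univ ×ˢ Ico a (c₁ * a), W w ∂muPlus μ := by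
        rw [ENNReal.mul_inv (Or.inl hB₀) (Or.inl hB_top)]
        ring
    _ ≤ K ^ θ * (ENNReal.ofReal (1 - c₁⁻¹))⁻¹ * ∫⁻ w in univ ×ˢ Ico a (c₁ * a), W w ∂muPlus μ := by
        rw [ENNReal.inv_mul_cancel hB₀ hB_top, mul_one]
        gcongr

theorem exists_lintegral_cone_rpow_le (hc₀ : 0 < c₀) (hc₁ : 1 < c₁) {θ : ℝ} (hθ₀ : 0 < θ)
    (hθ₁ : θ ≤ 1) :
    ∃ C : ℝ≥0∞, C < ∞ ∧ ∀ G : E × ℝ → ℝ≥0∞, Measurable G →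
      ∫⁻ x, (∫⁻ z in cone x, G z / vol μ z.1 z.2 ∂muPlus μ) ^ θ ∂μ
        ≤ C * ∫⁻ w, (⨍⁻ z in whitney c₀ c₁ w.1 w.2, G z ∂μ.prod volume) ^ θ ∂muPlus μ := by
  obtain ⟨S, hS⟩ := (isCompact_closedBall (0 : E) c₁).elim_finite_subcover
    (fun u => ball u (c₀ / 2)) (fun _ => isOpen_ball)
    fun y _ => mem_iUnion.2 ⟨y, mem_ball_self (half_pos hc₀)⟩
  set M := ENNReal.ofReal ((c₀ * c₁) ^ Module.finrank ℝ E * c₁ ^ 2) ^ θ *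
    (ENNReal.ofReal (1 - c₁⁻¹))⁻¹
  have hM : M < ∞ := by
    exact ENNReal.mul_lt_top (ENNReal.rpow_lt_top_of_nonneg hθ₀.le ENNReal.ofReal_ne_top)
      (ENNReal.inv_lt_top.2 (ENNReal.ofReal_pos.2 (sub_pos.2 (inv_lt_one_of_one_lt₀ hc₁))))
  refine ⟨S.card * M, ENNReal.mul_lt_top (ENNReal.natCast_lt_top _) hM, fun G hG => ?_⟩
  have hc₁₀ : 0 < c₁ := zero_lt_one.trans hc₁
  set I := fun (i : ℤ × S) (x : E) =>
    ∫⁻ z in coneBox c₀ c₁ (c₁ ^ i.1) i.2 x, G z / vol μ z.1 z.2 ∂muPlus μ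
  set W := fun w : E × ℝ => (⨍⁻ z in whitney c₀ c₁ w.1 w.2, G z ∂μ.prod volume) ^ θ
  have hI (i : ℤ × S) : Measurable fun x => I i x ^ θ :=
    (measurable_setLIntegral_prodMk_preimage
      (measurableSet_mem_ball_add_prod (c₁ ^ i.1 • (i.2 : E)) (c₀ / 2 * c₁ ^ i.1)
        measurableSet_Ico) (hG.div (measurable_vol_s15 μ))).pow_const θ
  have hpow (k : ℤ) : c₁ * c₁ ^ k = c₁ ^ (k + 1) := by rw [zpow_add_one₀ hc₁₀.ne', mul_comm]
  calc ∫⁻ x, (∫⁻ z in cone x, G z / vol μ z.1 z.2 ∂muPlus μ) ^ θ ∂μ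
      ≤ ∫⁻ x, ∑' i, I i x ^ θ ∂μ :=
        lintegral_mono (rpow_setLIntegral_cone_le_tsum (muPlus μ) hc₁ hS hθ₀ hθ₁ _)
    _ = ∑' i, ∫⁻ x, I i x ^ θ ∂μ := lintegral_tsum fun i => (hI i).aemeasurable
    _ ≤ ∑' i : ℤ × S, M * ∫⁻ w in univ ×ˢ Ico (c₁ ^ i.1) (c₁ ^ (i.1 + 1)), W w ∂muPlus μ :=
        ENNReal.tsum_le_tsum fun i => (lintegral_rpow_setLIntegral_coneBox_le μ hc₀ hc₁
          (zpow_pos hc₁₀ i.1) i.2 hθ₀.le hG).trans_eq (by rw [hpow])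
    _ = S.card * M * ∑' k : ℤ, ∫⁻ w in univ ×ˢ Ico (c₁ ^ k) (c₁ ^ (k + 1)), W w ∂muPlus μ := by
        rw [ENNReal.tsum_prod', ← ENNReal.tsum_mul_left]
        refine tsum_congr fun k => ?_
        rw [tsum_fintype]
        simp only [Finset.sum_const, Finset.card_univ, Fintype.card_coe, nsmul_eq_mul, mul_assoc]
    _ ≤ S.card * M * ∫⁻ w, W w ∂muPlus μ := by
        gcongr
        exact tsum_setLIntegral_Ico_zpow_le _ hc₁.le _

theorem tentNormS_le_mul_Znorm {p q : ℝ} (s : ℝ) (hp : 0 < p) (hpq : p ≤ q) (hc₀ : 0 < c₀)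
    (hc₁ : 1 < c₁) :
    ∃ C : ℝ≥0∞, C < ∞ ∧ ∀ f : E × ℝ → ℂ, Measurable f →
      tentNormS μ p q s f ≤ C * Znorm μ p q s c₀ c₁ f := by
  have hq : 0 < q := hp.trans_le hpq
  obtain ⟨C, hC, hCG⟩ :=
    exists_lintegral_cone_rpow_le μ hc₀ hc₁ (div_pos hp hq) ((div_le_one hq).2 hpq)
  refine ⟨C ^ (1 / p), ENNReal.rpow_lt_top_of_nonneg (by positivity) hC.ne, fun f hf => ?_⟩
  set G := fun z => (‖Vpow μ (-s) f z‖₊ : ℝ≥0∞) ^ q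
  have hA (x : E) : Aq μ q (Vpow μ (-s) f) x ^ p
      = (∫⁻ z in cone x, G z / vol μ z.1 z.2 ∂muPlus μ) ^ (p / q) := by
    rw [Aq, ← ENNReal.rpow_mul, one_div_mul_eq_div]
  have hW (w : E × ℝ) : Wavg μ c₀ c₁ q (Vpow μ (-s) f) w.1 w.2 ^ p
      = (⨍⁻ z in whitney c₀ c₁ w.1 w.2, G z ∂μ.prod volume) ^ (p / q) := by
    rw [Wavg, ← ENNReal.rpow_mul, one_div_mul_eq_div, setLAverage_eq, ENNReal.div_eq_inv_mul]
  rw [tentNormS, tentNorm, Znorm, ← ENNReal.mul_rpow_of_nonneg _ _ (by positivity)]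
  gcongr
  simp_rw [hA, hW]
  exact hCG G ((measurable_Vpow μ _ hf).nnnorm.coe_nnreal_ennreal.pow_const q)

end ConeBox

theorem stmt15_general (n : ℕ) (p q s c₀ c₁ : ℝ)
    (hp : 0 < p) (hpq : p ≤ q) (hc₀ : 0 < c₀) (hc₁ : 1 < c₁) :
    ∃ C : ℝ≥0∞, C < ∞ ∧
      ∀ f : EuclideanSpace ℝ (Fin n) × ℝ → ℂ, Measurable f →
        tentNormS (volume : Measure (EuclideanSpace ℝ (Fin n))) p q s f ≤
          C * Znorm (volume : Measure (EuclideanSpace ℝ (Fin n))) p q s c₀ c₁ f :=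
  tentNormS_le_mul_Znorm volume s hp hpq hc₀ hc₁

/-- For `q ∈ (0,∞)`, `p ∈ (0,q]`, `s ∈ ℝ`:
`Z^{p,q}_s(ℝⁿ;c₀,c₁)` embeds continuously into `T^{p,q}_s(ℝⁿ)`. -/
theorem stmt15 (n : ℕ) (hn : 0 < n) (p q s c₀ c₁ : ℝ)
    (hq : 0 < q) (hp : 0 < p) (hpq : p ≤ q) (hc₀ : 0 < c₀) (hc₁ : 1 < c₁) :
    ∃ C : ℝ≥0∞, C < ∞ ∧
      ∀ f : EuclideanSpace ℝ (Fin n) × ℝ → ℂ, Measurable f →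
        tentNormS (volume : Measure (EuclideanSpace ℝ (Fin n))) p q s f ≤
          C * Znorm (volume : Measure (EuclideanSpace ℝ (Fin n))) p q s c₀ c₁ f :=
  stmt15_general n p q s c₀ c₁ hp hpq hc₀ hc₁

end WTS
end
end

section
/- Let 1 ≤ p ≤ q ≤ ∞ and s₀ > s₁ ∈ ℝ with s₁ − s₀ = 1/p − 1. If a is a T^{1,q}_{s₀}-atom (associated with any ball B ⊆ X), then a ∈ T^{p,q}_{s₁} with ‖a‖_{T^{p,q}_{s₁}} ≤ 1. No geometric assumptions on X beyond nondegeneracy are required. -/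
open MeasureTheory Metric Set Filter ENNReal
open scoped NNReal Topology

noncomputable section

namespace WTS

variable {X : Type*} [MetricSpace X] [MeasurableSpace X]

/-!
On the tent `T(B)` one has `V(y,t) ≤ μ(B)`, so `V^{-s₁} ≤ μ(B)^{s₀-s₁} V^{-s₀}` wherever the atom
lives, and `𝒜^q a(x) = 0` for `x ∉ B` because the cone at such an `x` misses `T(B)`. Hence
`‖a‖_{T^{p,q}_{s₁}}^p ≤ μ(B)^{(s₀-s₁)p} ∫_B (𝒜^q V^{-s₀} a)^p`, and Hölder's inequality on `B` with
exponent `q/p` bounds the integral by `μ(B)^{1-p/q} ‖a‖_{T^{q,q}_{s₀}}^p`. The size condition and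
`s₀ - s₁ = 1 - 1/p` make all powers of `μ(B)` cancel. For `p = q = ∞` the weight comparison
alone suffices.
-/

/- Hölder's inequality is applied to a measurable minorant of `g` with the same `p`-th power
integral, so no measurability of `g` is needed. -/
lemma lintegral_rpow_le_measure_univ_rpow_mul {α : Type*} [MeasurableSpace α] (ν : Measure α)
    (g : α → ℝ≥0∞) {p q : ℝ} (hp : 0 < p) (hpq : p ≤ q) :
    ∫⁻ x, g x ^ p ∂ν ≤ ν univ ^ (1 - p / q) * (∫⁻ x, g x ^ q ∂ν) ^ (p / q) := by
  have hq : 0 < q := hp.trans_le hpq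
  obtain ⟨h, hh, hhg, hint⟩ := exists_measurable_le_lintegral_eq ν fun x => g x ^ p
  have hroot_pow : ∀ x, (h x ^ (1 / p)) ^ p = h x := fun x => by
    rw [← ENNReal.rpow_mul, one_div_mul_cancel hp.ne', ENNReal.rpow_one]
  have hroot_le : ∀ x, h x ^ (1 / p) ≤ g x := fun x => by
    calc h x ^ (1 / p) ≤ (g x ^ p) ^ (1 / p) := ENNReal.rpow_le_rpow (hhg x) (by positivity)
      _ = g x := by rw [← ENNReal.rpow_mul, mul_one_div_cancel hp.ne', ENNReal.rpow_one]
  have holder := eLpNorm'_le_eLpNorm'_mul_rpow_measure_univ hp hpq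
    (hh.pow_const (1 / p)).aestronglyMeasurable (μ := ν)
  simp only [eLpNorm', enorm_eq_self, hroot_pow] at holder
  have hroot_int : ∫⁻ x, (h x ^ (1 / p)) ^ q ∂ν ≤ ∫⁻ x, g x ^ q ∂ν :=
    lintegral_mono fun x => ENNReal.rpow_le_rpow (hroot_le x) hq.le
  calc ∫⁻ x, g x ^ p ∂ν = ((∫⁻ x, h x ∂ν) ^ (1 / p)) ^ p := by
        rw [hint, ← ENNReal.rpow_mul, one_div_mul_cancel hp.ne', ENNReal.rpow_one]
    _ ≤ ((∫⁻ x, g x ^ q ∂ν) ^ (1 / q) * ν univ ^ (1 / p - 1 / q)) ^ p := by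
        gcongr
        exact holder.trans (by gcongr)
    _ = ν univ ^ (1 - p / q) * (∫⁻ x, g x ^ q ∂ν) ^ (p / q) := by
        rw [ENNReal.mul_rpow_of_nonneg _ _ hp.le, ← ENNReal.rpow_mul, ← ENNReal.rpow_mul, mul_comm]
        congr 2 <;> field_simp

lemma nnnorm_Vpow {μ : Measure X} (s : ℝ) (f : X × ℝ → ℂ) {w : X × ℝ}
    (h0 : vol μ w.1 w.2 ≠ 0) (htop : vol μ w.1 w.2 ≠ ∞) :
    (‖Vpow μ s f w‖₊ : ℝ≥0∞) = vol μ w.1 w.2 ^ s * ‖f w‖₊ := by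
  rw [Vpow, nnnorm_mul, Complex.nnnorm_real, ENNReal.coe_mul, ENNReal.toReal_rpow,
    Real.nnnorm_of_nonneg ENNReal.toReal_nonneg, ← ENNReal.ofReal_eq_coe_nnreal,
    ENNReal.ofReal_toReal (ENNReal.rpow_ne_top_of_ne_zero h0 htop)]

lemma nnnorm_Vpow_le_of_vol_le {μ : Measure X} (hμ : Nondeg μ) {w : X × ℝ} (hw : 0 < w.2)
    {M : ℝ≥0∞} (hM : vol μ w.1 w.2 ≤ M) {s₀ s₁ : ℝ} (hs : s₁ ≤ s₀) (f : X × ℝ → ℂ) :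
    (‖Vpow μ (-s₁) f w‖₊ : ℝ≥0∞) ≤ M ^ (s₀ - s₁) * ‖Vpow μ (-s₀) f w‖₊ := by
  have h0 : vol μ w.1 w.2 ≠ 0 := (hμ w.1 w.2 hw).1.ne'
  have htop : vol μ w.1 w.2 ≠ ∞ := (hμ w.1 w.2 hw).2.ne
  rw [nnnorm_Vpow _ _ h0 htop, nnnorm_Vpow _ _ h0 htop,
    show -s₁ = (s₀ - s₁) + -s₀ by ring, ENNReal.rpow_add _ _ h0 htop, mul_assoc]
  gcongr

lemma ae_nnnorm_Vpow_le_of_ae_eq_zero_off_tent {μ : Measure X} (hμ : Nondeg μ) {z : X} {r : ℝ}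
    {s₀ s₁ : ℝ} (hs : s₁ ≤ s₀) {f : X × ℝ → ℂ}
    (hsupp : ∀ᵐ w ∂muPlus μ, w ∉ tent z r → f w = 0) :
    ∀ᵐ w ∂muPlus μ,
      (‖Vpow μ (-s₁) f w‖₊ : ℝ≥0∞) ≤ μ (ball z r) ^ (s₀ - s₁) * ‖Vpow μ (-s₀) f w‖₊ := by
  filter_upwards [hsupp] with w hw
  by_cases hwt : w ∈ tent z r
  · exact nnnorm_Vpow_le_of_vol_le hμ hwt.1 (measure_mono hwt.2) hs f
  · simp [Vpow, hw hwt]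

lemma AqE_le_mul_of_ae_le {q : ℝ≥0∞} (hq : q ≠ 0) {μ : Measure X} {f g : X × ℝ → ℂ} {x : X}
    {C : ℝ≥0∞} (hC : C ≠ ∞)
    (h : ∀ᵐ w ∂(muPlus μ).restrict (cone x), (‖f w‖₊ : ℝ≥0∞) ≤ C * ‖g w‖₊) :
    AqE μ q f x ≤ C * AqE μ q g x := by
  by_cases hqtop : q = ∞
  · simp only [AqE, if_pos hqtop, Ainf]
    rw [← ENNReal.essSup_const_mul]
    exact essSup_mono_ae h
  · simp only [AqE, if_neg hqtop, Aq]
    have hq' : 0 < q.toReal := ENNReal.toReal_pos hq hqtop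
    have hCq : C ^ q.toReal ≠ ∞ := ENNReal.rpow_ne_top_of_nonneg hq'.le hC
    calc (∫⁻ w in cone x, (‖f w‖₊ : ℝ≥0∞) ^ q.toReal / vol μ w.1 w.2 ∂muPlus μ) ^ (1 / q.toReal)
        ≤ (∫⁻ w in cone x, C ^ q.toReal * ((‖g w‖₊ : ℝ≥0∞) ^ q.toReal / vol μ w.1 w.2)
            ∂muPlus μ) ^ (1 / q.toReal) := by
          gcongr ?_ ^ _
          refine lintegral_mono_ae (h.mono fun w hw => ?_)
          rw [← mul_div_assoc, ← ENNReal.mul_rpow_of_nonneg _ _ hq'.le]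
          gcongr
      _ = C * (∫⁻ w in cone x, (‖g w‖₊ : ℝ≥0∞) ^ q.toReal / vol μ w.1 w.2 ∂muPlus μ) ^
            (1 / q.toReal) := by
          rw [lintegral_const_mul' _ _ hCq, ENNReal.mul_rpow_of_nonneg _ _ (by positivity),
            ← ENNReal.rpow_mul, mul_one_div_cancel hq'.ne', ENNReal.rpow_one]

lemma Ainf_Vpow_le_linfNormPlus (μ : Measure X) (s : ℝ) (f : X × ℝ → ℂ) (x : X) :
    Ainf μ (Vpow μ (-s) f) x ≤ linfNormPlus μ s f :=
  essSup_mono_measure' Measure.restrict_le_self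

lemma linfNormPlus_le_mul_of_ae_le {μ : Measure X} {s₀ s₁ : ℝ} {f : X × ℝ → ℂ} {C : ℝ≥0∞}
    (h : ∀ᵐ w ∂muPlus μ, (‖Vpow μ (-s₁) f w‖₊ : ℝ≥0∞) ≤ C * ‖Vpow μ (-s₀) f w‖₊) :
    linfNormPlus μ s₁ f ≤ C * linfNormPlus μ s₀ f := by
  rw [linfNormPlus, linfNormPlus, ← ENNReal.essSup_const_mul]
  exact essSup_mono_ae h

/- For `q = ∞` the junk value `p / ∞.toReal = 0` makes the exponent of `μ B` equal to `1`,
which is what the trivial bound by the supremum gives. -/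
lemma setLIntegral_AqE_Vpow_rpow_le {μ : Measure X} {p : ℝ} (hp : 0 < p) {q : ℝ≥0∞}
    (hpq : ENNReal.ofReal p ≤ q) (s : ℝ) (f : X × ℝ → ℂ) (B : Set X) :
    ∫⁻ x in B, AqE μ q (Vpow μ (-s) f) x ^ p ∂μ ≤ μ B ^ (1 - p / q.toReal) * TNE μ q q s f ^ p := by
  by_cases hqtop : q = ∞
  · subst hqtop
    simp only [AqE, TNE, if_true, ENNReal.toReal_top, _root_.div_zero, sub_zero, ENNReal.rpow_one]
    calc ∫⁻ x in B, Ainf μ (Vpow μ (-s) f) x ^ p ∂μ ≤ ∫⁻ _ in B, linfNormPlus μ s f ^ p ∂μ :=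
          lintegral_mono fun x => by gcongr; exact Ainf_Vpow_le_linfNormPlus μ s f x
      _ = μ B * linfNormPlus μ s f ^ p := by rw [setLIntegral_const, mul_comm]
  · have hpq' : p ≤ q.toReal := (ENNReal.ofReal_le_iff_le_toReal hqtop).1 hpq
    have hq : 0 < q.toReal := hp.trans_le hpq'
    simp only [TNE, if_neg hqtop]
    calc ∫⁻ x in B, AqE μ q (Vpow μ (-s) f) x ^ p ∂μ
        ≤ μ B ^ (1 - p / q.toReal) *
            (∫⁻ x in B, AqE μ q (Vpow μ (-s) f) x ^ q.toReal ∂μ) ^ (p / q.toReal) := by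
          simpa using lintegral_rpow_le_measure_univ_rpow_mul (μ.restrict B) _ hp hpq'
      _ ≤ μ B ^ (1 - p / q.toReal) *
            (∫⁻ x, AqE μ q (Vpow μ (-s) f) x ^ q.toReal ∂μ) ^ (p / q.toReal) := by
          gcongr
          exact Measure.restrict_le_self
      _ = μ B ^ (1 - p / q.toReal) *
            ((∫⁻ x, AqE μ q (Vpow μ (-s) f) x ^ q.toReal ∂μ) ^ (1 / q.toReal)) ^ p := by
          rw [← ENNReal.rpow_mul, one_div_mul_eq_div]

lemma AqE_eq_zero_of_notMem_ball [BorelSpace X] {μ : Measure X} {q : ℝ≥0∞} (hq : q ≠ 0)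
    {z : X} {r : ℝ} {f : X × ℝ → ℂ} (hsupp : ∀ᵐ w ∂muPlus μ, w ∉ tent z r → f w = 0)
    {x : X} (hx : x ∉ ball z r) :
    AqE μ q f x = 0 := by
  have hvanish : ∀ᵐ w ∂(muPlus μ).restrict (cone x), (‖f w‖₊ : ℝ≥0∞) ≤ 0 * ‖f w‖₊ := by
    filter_upwards [ae_restrict_of_ae hsupp,
      ae_restrict_mem (isOpen_lt (by fun_prop) continuous_snd).measurableSet] with w hw hwx
    simp [hw fun hwt => hx (hwt.2 (mem_ball.2 hwx))]
  simpa using AqE_le_mul_of_ae_le hq zero_ne_top hvanish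

lemma lintegral_AqE_Vpow_rpow_le [BorelSpace X] {μ : Measure X} (hμ : Nondeg μ) {z : X} {r : ℝ}
    (hr : 0 < r) {s₀ s₁ : ℝ} (hs : s₁ ≤ s₀) {f : X × ℝ → ℂ}
    (hsupp : ∀ᵐ w ∂muPlus μ, w ∉ tent z r → f w = 0) {p : ℝ} (hp : 0 < p) {q : ℝ≥0∞}
    (hpq : ENNReal.ofReal p ≤ q) :
    ∫⁻ x, AqE μ q (Vpow μ (-s₁) f) x ^ p ∂μ ≤
      μ (ball z r) ^ ((s₀ - s₁) * p + (1 - p / q.toReal)) * TNE μ q q s₀ f ^ p := by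
  have hq : q ≠ 0 := (ENNReal.ofReal_pos.2 hp).trans_le hpq |>.ne'
  have hC : μ (ball z r) ^ (s₀ - s₁) ≠ ∞ :=
    ENNReal.rpow_ne_top_of_nonneg (sub_nonneg.2 hs) (hμ z r hr).2.ne
  have hsupp₁ : ∀ᵐ w ∂muPlus μ, w ∉ tent z r → Vpow μ (-s₁) f w = 0 :=
    hsupp.mono fun w hw hwt => by simp [Vpow, hw hwt]
  have hF₁_supp : (fun x => AqE μ q (Vpow μ (-s₁) f) x ^ p).support ⊆ ball z r := by
    intro x hx
    by_contra hxB
    simp [AqE_eq_zero_of_notMem_ball hq hsupp₁ hxB, ENNReal.zero_rpow_of_pos hp] at hx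
  rw [← setLIntegral_eq_of_support_subset hF₁_supp]
  calc ∫⁻ x in ball z r, AqE μ q (Vpow μ (-s₁) f) x ^ p ∂μ
      ≤ ∫⁻ x in ball z r, (μ (ball z r) ^ (s₀ - s₁)) ^ p * AqE μ q (Vpow μ (-s₀) f) x ^ p ∂μ := by
        refine lintegral_mono fun x => ?_
        rw [← ENNReal.mul_rpow_of_nonneg _ _ hp.le]
        gcongr
        exact AqE_le_mul_of_ae_le hq hC
          (ae_restrict_of_ae (ae_nnnorm_Vpow_le_of_ae_eq_zero_off_tent hμ hs hsupp))
    _ = (μ (ball z r) ^ (s₀ - s₁)) ^ p *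
          ∫⁻ x in ball z r, AqE μ q (Vpow μ (-s₀) f) x ^ p ∂μ :=
        lintegral_const_mul' _ _ (ENNReal.rpow_ne_top_of_nonneg hp.le hC)
    _ ≤ (μ (ball z r) ^ (s₀ - s₁)) ^ p *
          (μ (ball z r) ^ (1 - p / q.toReal) * TNE μ q q s₀ f ^ p) := by
        gcongr
        exact setLIntegral_AqE_Vpow_rpow_le hp hpq s₀ f _
    _ = μ (ball z r) ^ ((s₀ - s₁) * p + (1 - p / q.toReal)) * TNE μ q q s₀ f ^ p := by
        rw [← mul_assoc, ← ENNReal.rpow_mul,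
          ENNReal.rpow_add _ _ (hμ z r hr).1.ne' (hμ z r hr).2.ne]

lemma linfNormPlus_le_one_of_ae_eq_zero_off_tent {μ : Measure X} (hμ : Nondeg μ) {z : X} {r : ℝ}
    (hr : 0 < r) {s₀ s₁ : ℝ} (hθ : s₀ - s₁ = 1) {f : X × ℝ → ℂ}
    (hsupp : ∀ᵐ w ∂muPlus μ, w ∉ tent z r → f w = 0)
    (hsize : linfNormPlus μ s₀ f ≤ (μ (ball z r))⁻¹) :
    linfNormPlus μ s₁ f ≤ 1 :=
  calc linfNormPlus μ s₁ f ≤ μ (ball z r) ^ (s₀ - s₁) * linfNormPlus μ s₀ f :=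
        linfNormPlus_le_mul_of_ae_le
          (ae_nnnorm_Vpow_le_of_ae_eq_zero_off_tent hμ (by linarith) hsupp)
    _ ≤ μ (ball z r) * (μ (ball z r))⁻¹ := by
        rw [hθ, ENNReal.rpow_one]
        gcongr
    _ = 1 := ENNReal.mul_inv_cancel (hμ z r hr).1.ne' (hμ z r hr).2.ne

theorem stmt19_general {X : Type*} [MetricSpace X] [MeasurableSpace X] [BorelSpace X]
    (μ : Measure X) (hμ : Nondeg μ)
    (p q : ℝ≥0∞) (hp1 : 1 ≤ p) (hpq : p ≤ q)
    (s₀ s₁ : ℝ) (hrel : s₁ - s₀ = 1/p.toReal - 1)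
    (a : X × ℝ → ℂ) (z : X) (r : ℝ) (hr : 0 < r)
    (hsupp : ∀ᵐ w ∂muPlus μ, w ∉ tent z r → a w = 0)
    (hsize : TNE μ q q s₀ a ≤ μ (ball z r) ^ (1/q.toReal - 1)) :
    TNE μ p q s₁ a ≤ 1 := by
  have hB0 : μ (ball z r) ≠ 0 := (hμ z r hr).1.ne'
  have hBtop : μ (ball z r) ≠ ∞ := (hμ z r hr).2.ne
  have hθ : s₀ - s₁ = 1 - 1 / p.toReal := by linarith
  have hs : s₁ ≤ s₀ := by
    have : p⁻¹.toReal ≤ 1 := by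
      simpa using ENNReal.toReal_mono one_ne_top (ENNReal.inv_le_one.2 hp1)
    rw [ENNReal.toReal_inv, ← one_div] at this
    linarith
  by_cases hp : p = ∞
  · obtain rfl : q = ∞ := top_le_iff.1 (hp ▸ hpq)
    subst hp
    simp only [TNE, if_true, ENNReal.toReal_top, _root_.div_zero, zero_sub, sub_zero,
      ENNReal.rpow_neg_one] at hsize hθ ⊢
    exact linfNormPlus_le_one_of_ae_eq_zero_off_tent hμ hr hθ hsupp hsize
  · have hp0 : 0 < p.toReal := ENNReal.toReal_pos (one_pos.trans_le hp1).ne' hp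
    have hpq' : ENNReal.ofReal p.toReal ≤ q := by rwa [ENNReal.ofReal_toReal hp]
    have key : ∫⁻ x, AqE μ q (Vpow μ (-s₁) a) x ^ p.toReal ∂μ ≤ 1 := calc
      _ ≤ μ (ball z r) ^ ((s₀ - s₁) * p.toReal + (1 - p.toReal / q.toReal)) *
            TNE μ q q s₀ a ^ p.toReal := lintegral_AqE_Vpow_rpow_le hμ hr hs hsupp hp0 hpq'
      _ ≤ μ (ball z r) ^ ((s₀ - s₁) * p.toReal + (1 - p.toReal / q.toReal)) *
            (μ (ball z r) ^ (1 / q.toReal - 1)) ^ p.toReal := by gcongr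
      _ = μ (ball z r) ^ (0 : ℝ) := by
          rw [← ENNReal.rpow_mul, ← ENNReal.rpow_add _ _ hB0 hBtop, hθ]
          congr 1
          field_simp
          ring
      _ = 1 := ENNReal.rpow_zero
    simp only [TNE, if_neg hp]
    exact ENNReal.rpow_le_one key (by positivity)

/-- Let `1 ≤ p ≤ q ≤ ∞` and `s₁ - s₀ = 1/p - 1` with `s₁ < s₀`.
If `a` is a `T^{1,q}_{s₀}`-atom (essentially supported in `T(B)` with
`‖a‖_{T^{q,q}_{s₀}} ≤ μ(B)^{1/q - 1}`), then `‖a‖_{T^{p,q}_{s₁}} ≤ 1`.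
No geometric assumptions beyond nondegeneracy are required. -/
theorem stmt19 {X : Type*} [MetricSpace X] [MeasurableSpace X] [BorelSpace X] [Nonempty X]
    (μ : Measure X) (hμ : Nondeg μ)
    (p q : ℝ≥0∞) (hp1 : 1 ≤ p) (hpq : p ≤ q)
    (s₀ s₁ : ℝ) (hs : s₁ < s₀) (hrel : s₁ - s₀ = 1/p.toReal - 1)
    (a : X × ℝ → ℂ) (ha : Measurable a) (z : X) (r : ℝ) (hr : 0 < r)
    (hsupp : ∀ᵐ w ∂muPlus μ, w ∉ tent z r → a w = 0)
    (hsize : TNE μ q q s₀ a ≤ μ (ball z r) ^ (1/q.toReal - 1)) :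
    TNE μ p q s₁ a ≤ 1 :=
  stmt19_general μ hμ p q hp1 hpq s₀ s₁ hrel a z r hr hsupp hsize

end WTS
end
end
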